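/- arXiv:nlin/0306027 — 2 statements merged into one kernel-verified Lean document; each statement's English description precedes it below -/
import Mathlib

section
/- Let f : ℂ → Matrix_N(ℂ) be a polynomial matrix function all of whose coefficient matrices are diagonal, let κ ∈ ℂ and s ≥ 1. Then exp(T_s[f](κ)) = T_s[exp∘f](κ), where exp∘f : k ↦ exp(f(k)) is the pointwise matrix exponential of f (an entire matrix-valued function, so its derivatives at κ exist); that is, taking the matrix exponential commutes with the block lower-triangular Toeplitz construction from Taylor coefficients. -/
open Polynomial Finset


open Polynomial Finset

lemma coeff_pow_eq_zero_of_lt {R : Type*} [CommRing R] {q : R[X]} (h0 : q.coeff 0 = 0)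
    {n m : ℕ} (hmn : m < n) : (q ^ n).coeff m = 0 := by
  obtain ⟨t, ht⟩ := pow_dvd_pow_of_dvd (Polynomial.X_dvd_iff.2 h0) n
  rw [ht, mul_comm, Polynomial.coeff_mul_X_pow', if_neg (by omega)]

lemma coeff_sum_CX {R : Type*} [CommRing R] (g : ℕ → R) (S : Finset ℕ) (t : ℕ) :
    (∑ m ∈ S, C (g m) * X ^ m).coeff t = if t ∈ S then g t else 0 := by
  rw [finset_sum_coeff]
  simp only [coeff_C_mul, coeff_X_pow]
  rw [← Finset.sum_ite_eq' S t g]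
  refine Finset.sum_congr rfl fun m _ => ?_
  by_cases h : m = t
  · simp [h]
  · simp [h, show ¬ t = m from fun ht => h ht.symm]


lemma iteratedDeriv_eval (P : ℂ[X]) (m : ℕ) (x : ℂ) :
    iteratedDeriv m (fun k => P.eval k) x = (derivative^[m] P).eval x := by
  induction m generalizing P with
  | zero => simp
  | succ m ih =>
    rw [iteratedDeriv_succ']
    have h : deriv (fun k => P.eval k) = fun k => (derivative P).eval k :=
      funext fun y => P.deriv
    rw [h, ih, Function.iterate_succ_apply]

lemma contDiff_eval (P : ℂ[X]) : ContDiff ℂ (⊤ : ℕ∞) fun k => P.eval k := by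
  induction P using Polynomial.induction_on' with
  | add p q hp hq => simpa using hp.add hq
  | monomial n a => simpa [eval_monomial] using contDiff_const.mul (contDiff_id.pow n)

lemma formal_rec (q : ℂ[X]) (h0 : q.coeff 0 = 0) (m : ℕ) :
    ((m+1 : ℕ) : ℂ) * ∑ n ∈ range (m+2), ((n.factorial : ℂ))⁻¹ * (q ^ n).coeff (m+1)
      = ∑ j ∈ range (m+1), ((j+1 : ℕ) : ℂ) * q.coeff (j+1) *
          ∑ n ∈ range (m-j+1), ((n.factorial : ℂ))⁻¹ * (q ^ n).coeff (m-j) := by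
  have key : ∀ n : ℕ,
      ((m+1:ℕ):ℂ) * ((((n+1).factorial : ℕ):ℂ))⁻¹ * (q ^ (n+1)).coeff (m+1)
        = ((n.factorial : ℂ))⁻¹ * (derivative q * q ^ n).coeff m := by
    intro n
    have h1 : (q ^ (n+1)).coeff (m+1) * ((m+1 : ℕ):ℂ) = (derivative (q ^ (n+1))).coeff m := by
      rw [coeff_derivative]; push_cast; ring
    have h2 : derivative (q ^ (n+1)) = C ((n+1 : ℕ) : ℂ) * (q ^ n * derivative q) := by
      rw [derivative_pow]; push_cast; ring_nf
    have h3 : (derivative (q ^ (n+1))).coeff m = ((n+1:ℕ):ℂ) * (derivative q * q ^ n).coeff m := by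
      rw [h2, coeff_C_mul, mul_comm (q ^ n)]
    have hfac : ((((n+1).factorial : ℕ):ℂ))⁻¹ * ((n+1:ℕ):ℂ) = ((n.factorial : ℂ))⁻¹ := by
      rw [Nat.factorial_succ]
      push_cast
      have hn1 : ((n:ℂ) + 1) ≠ 0 := by norm_cast
      have hnf : ((n.factorial : ℕ) : ℂ) ≠ 0 := Nat.cast_ne_zero.2 n.factorial_ne_zero
      field_simp
    calc ((m+1:ℕ):ℂ) * ((((n+1).factorial : ℕ):ℂ))⁻¹ * (q ^ (n+1)).coeff (m+1)
        = ((((n+1).factorial : ℕ):ℂ))⁻¹ * ((q ^ (n+1)).coeff (m+1) * ((m+1:ℕ):ℂ)) := by ring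
      _ = ((((n+1).factorial : ℕ):ℂ))⁻¹ * (((n+1:ℕ):ℂ) * (derivative q * q ^ n).coeff m) := by
          rw [h1, h3]
      _ = (((((n+1).factorial : ℕ):ℂ))⁻¹ * ((n+1:ℕ):ℂ)) * (derivative q * q ^ n).coeff m := by
          ring
      _ = ((n.factorial : ℂ))⁻¹ * (derivative q * q ^ n).coeff m := by rw [hfac]
  calc ((m+1 : ℕ) : ℂ) * ∑ n ∈ range (m+2), ((n.factorial : ℂ))⁻¹ * (q ^ n).coeff (m+1)
      = ∑ n ∈ range (m+2), ((m+1 : ℕ) : ℂ) * ((n.factorial : ℂ))⁻¹ * (q ^ n).coeff (m+1) := by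
        rw [Finset.mul_sum]; exact Finset.sum_congr rfl fun n _ => by ring
    _ = (∑ n ∈ range (m+1),
          ((m+1 : ℕ) : ℂ) * (((n+1).factorial : ℂ))⁻¹ * (q ^ (n+1)).coeff (m+1))
          + ((m+1 : ℕ) : ℂ) * ((Nat.factorial 0 : ℂ))⁻¹ * (q ^ 0).coeff (m+1) := by
        rw [Finset.sum_range_succ']
    _ = ∑ n ∈ range (m+1), ((n.factorial : ℂ))⁻¹ * (derivative q * q ^ n).coeff m := by
        have hz : ((q:ℂ[X]) ^ 0).coeff (m+1) = (0:ℂ) := by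
          simp [coeff_one]
        rw [hz, mul_zero, add_zero]
        exact Finset.sum_congr rfl fun n _ => key n
    _ = ∑ n ∈ range (m+1), ((n.factorial : ℂ))⁻¹ *
          ∑ j ∈ range (m+1), (derivative q).coeff j * (q ^ n).coeff (m - j) := by
        refine Finset.sum_congr rfl fun n _ => ?_
        rw [coeff_mul, Finset.Nat.sum_antidiagonal_eq_sum_range_succ_mk]
    _ = ∑ j ∈ range (m+1), ∑ n ∈ range (m+1),
          ((n.factorial : ℂ))⁻¹ * ((derivative q).coeff j * (q ^ n).coeff (m - j)) := by
        rw [Finset.sum_comm]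
        exact Finset.sum_congr rfl fun n _ => by rw [Finset.mul_sum]
    _ = ∑ j ∈ range (m+1), ((j+1 : ℕ) : ℂ) * q.coeff (j+1) *
          ∑ n ∈ range (m+1), ((n.factorial : ℂ))⁻¹ * (q ^ n).coeff (m-j) := by
        refine Finset.sum_congr rfl fun j _ => ?_
        rw [Finset.mul_sum]
        refine Finset.sum_congr rfl fun n _ => ?_
        rw [coeff_derivative]
        push_cast
        ring
    _ = ∑ j ∈ range (m+1), ((j+1 : ℕ) : ℂ) * q.coeff (j+1) *
          ∑ n ∈ range (m-j+1), ((n.factorial : ℂ))⁻¹ * (q ^ n).coeff (m-j) := by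
        refine Finset.sum_congr rfl fun j hj => ?_
        congr 1
        refine (Finset.sum_subset (Finset.range_subset_range.2 (by omega)) fun n _ hn => ?_).symm
        have hlt : m - j < n := by
          simp only [Finset.mem_range] at hn
          omega
        rw [coeff_pow_eq_zero_of_lt h0 hlt, mul_zero]

lemma iteratedDeriv_add' (n : ℕ) (f g : ℂ → ℂ) (hf : ContDiff ℂ (⊤:ℕ∞) f)
    (hg : ContDiff ℂ (⊤:ℕ∞) g) (x : ℂ) :
    iteratedDeriv n (fun k => f k + g k) x = iteratedDeriv n f x + iteratedDeriv n g x := by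
  have : (fun k => f k + g k) = f + g := rfl
  rw [this, ← iteratedDerivWithin_univ, ← iteratedDerivWithin_univ, ← iteratedDerivWithin_univ]
  exact iteratedDerivWithin_add (Set.mem_univ x) uniqueDiffOn_univ
    (hf.contDiffWithinAt.of_le (by exact_mod_cast le_top)) (hg.contDiffWithinAt.of_le (by exact_mod_cast le_top))

lemma iteratedDeriv_mul' (n : ℕ) (f g : ℂ → ℂ) (hf : ContDiff ℂ (⊤:ℕ∞) f)
    (hg : ContDiff ℂ (⊤:ℕ∞) g) (x : ℂ) :
    iteratedDeriv n (fun k => f k * g k) x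
      = ∑ j ∈ range (n+1), (n.choose j : ℂ) * iteratedDeriv j f x * iteratedDeriv (n-j) g x := by
  induction n generalizing f g x with
  | zero => simp
  | succ n ih =>
    have hf' : ContDiff ℂ (⊤:ℕ∞) (deriv f) := (contDiff_infty_iff_deriv.mp hf).2
    have hg' : ContDiff ℂ (⊤:ℕ∞) (deriv g) := (contDiff_infty_iff_deriv.mp hg).2
    have hfd : Differentiable ℂ f := (contDiff_infty_iff_deriv.mp hf).1
    have hgd : Differentiable ℂ g := (contDiff_infty_iff_deriv.mp hg).1
    have hder : deriv (fun k => f k * g k)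
        = fun k => deriv f k * g k + f k * deriv g k := by
      funext y
      exact deriv_mul (hfd y) (hgd y)
    rw [iteratedDeriv_succ', hder]
    rw [iteratedDeriv_add' n _ _ (hf'.mul hg) (hf.mul hg') x]
    rw [ih _ _ hf' hg x, ih _ _ hf hg' x]
    -- now Pascal juggling
    have e1 : ∑ j ∈ range (n+1), ((n.choose j : ℕ) : ℂ) * iteratedDeriv j (deriv f) x
        * iteratedDeriv (n-j) g x
        = ∑ j ∈ range (n+1), ((n.choose j : ℕ) : ℂ) * iteratedDeriv (j+1) f x
        * iteratedDeriv (n-j) g x := by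
      refine Finset.sum_congr rfl fun j _ => ?_
      rw [← iteratedDeriv_succ']
    have e2 : ∑ j ∈ range (n+1), ((n.choose j : ℕ) : ℂ) * iteratedDeriv j f x
        * iteratedDeriv (n-j) (deriv g) x
        = ∑ j ∈ range (n+1), ((n.choose j : ℕ) : ℂ) * iteratedDeriv j f x
        * iteratedDeriv (n+1-j) g x := by
      refine Finset.sum_congr rfl fun j hj => ?_
      have hjn : j ≤ n := by simpa [Nat.lt_succ_iff] using hj
      have : n + 1 - j = (n - j) + 1 := by omega
      rw [this, ← iteratedDeriv_succ']
    rw [e1, e2]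
    set A : ℕ → ℂ := fun j => iteratedDeriv j f x with hA
    set B : ℕ → ℂ := fun j => iteratedDeriv j g x with hB
    -- goal : Σ_{j∈range(n+1)} C(n,j) A(j+1) B(n-j) + Σ_{j∈range(n+1)} C(n,j) A j B(n+1-j)
    --      = Σ_{j∈range(n+2)} C(n+1,j) A j B(n+1-j)
    rw [Finset.sum_range_succ' (fun j => ((n+1).choose j : ℂ) * A j * B (n+1-j)) (n+1)]
    have t0 : (((n+1).choose 0 : ℕ) : ℂ) * A 0 * B (n+1-0) = A 0 * B (n+1) := by
      simp
    rw [t0]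
    have tsplit : ∀ j ∈ range (n+1),
        (((n+1).choose (j+1) : ℕ) : ℂ) * A (j+1) * B (n+1-(j+1))
          = ((n.choose j : ℕ) : ℂ) * A (j+1) * B (n-j)
            + ((n.choose (j+1) : ℕ) : ℂ) * A (j+1) * B (n-j) := by
      intro j hj
      have : (n+1).choose (j+1) = n.choose j + n.choose (j+1) := Nat.choose_succ_succ n j
      rw [this]
      have hnj : n + 1 - (j + 1) = n - j := by omega
      rw [hnj]
      push_cast
      ring
    rw [Finset.sum_congr rfl tsplit, Finset.sum_add_distrib]
    -- remains: Σ C(n,j) A(j+1) B(n-j) + Σ C(n,j) A j B(n+1-j)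
    --        = (Σ C(n,j) A(j+1) B(n-j) + Σ C(n,j+1) A(j+1) B(n-j)) + A 0 B(n+1)
    have e3 : ∑ j ∈ range (n+1), ((n.choose j : ℕ) : ℂ) * A j * B (n+1-j)
        = (∑ j ∈ range n, ((n.choose (j+1) : ℕ) : ℂ) * A (j+1) * B (n-j)) + A 0 * B (n+1) := by
      rw [Finset.sum_range_succ' (fun j => ((n.choose j : ℕ) : ℂ) * A j * B (n+1-j)) n]
      congr 1
      · refine Finset.sum_congr rfl fun j hj => ?_
        have : n + 1 - (j+1) = n - j := by omega
        rw [this]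
      · simp
    have e4 : ∑ j ∈ range (n+1), ((n.choose (j+1) : ℕ) : ℂ) * A (j+1) * B (n-j)
        = ∑ j ∈ range n, ((n.choose (j+1) : ℕ) : ℂ) * A (j+1) * B (n-j) := by
      rw [Finset.sum_range_succ]
      simp [Nat.choose_succ_self]
    rw [e3, e4]
    ring

lemma scalarL (P : ℂ[X]) (κ : ℂ) (s : ℕ) (q : ℂ[X]) (h0 : q.coeff 0 = 0)
    (hq : ∀ t, 0 < t → t < s →
      q.coeff t = ((t.factorial : ℂ))⁻¹ * iteratedDeriv t (fun k => P.eval k) κ) :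
    ∀ m, m < s →
      iteratedDeriv m (fun k => Complex.exp (P.eval k)) κ
        = (m.factorial : ℂ) * Complex.exp (P.eval κ)
            * ∑ n ∈ range (m+1), ((n.factorial : ℂ))⁻¹ * (q ^ n).coeff m := by
  have hE : ContDiff ℂ (⊤:ℕ∞) (fun k => Complex.exp (P.eval k)) :=
    Complex.contDiff_exp.comp (contDiff_eval P)
  intro m
  induction m using Nat.strong_induction_on with
  | _ m IH =>
    intro hms
    match m with
    | 0 => simp
    | (m+1) =>
      have hderiv : deriv (fun k => Complex.exp (P.eval k))
          = fun k => (derivative P).eval k * Complex.exp (P.eval k) := by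
        funext y
        rw [((P.hasDerivAt y).cexp).deriv, mul_comm]
      rw [iteratedDeriv_succ', hderiv]
      rw [iteratedDeriv_mul' m _ _ (contDiff_eval (derivative P)) hE κ]
      have hterm : ∀ j ∈ range (m+1),
          ((m.choose j : ℕ) : ℂ) * iteratedDeriv j (fun k => (derivative P).eval k) κ
            * iteratedDeriv (m-j) (fun k => Complex.exp (P.eval k)) κ
          = (m.factorial : ℂ) * Complex.exp (P.eval κ) *
              (((j+1:ℕ) : ℂ) * q.coeff (j+1) *
                ∑ n ∈ range (m-j+1), ((n.factorial : ℂ))⁻¹ * (q ^ n).coeff (m-j)) := by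
        intro j hj
        have hjm : j ≤ m := by simpa [Nat.lt_succ_iff] using hj
        have h1 : iteratedDeriv j (fun k => (derivative P).eval k) κ
            = iteratedDeriv (j+1) (fun k => P.eval k) κ := by
          rw [iteratedDeriv_eval, iteratedDeriv_eval, ← Function.iterate_succ_apply]
        have h2 : iteratedDeriv (j+1) (fun k => P.eval k) κ
            = (((j+1).factorial : ℕ) : ℂ) * q.coeff (j+1) := by
          rw [hq (j+1) (Nat.succ_pos j) (by omega)]
          have : (((j+1).factorial : ℕ) : ℂ) ≠ 0 := Nat.cast_ne_zero.2 (Nat.factorial_ne_zero _)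
          field_simp
        have h3 : iteratedDeriv (m-j) (fun k => Complex.exp (P.eval k)) κ
            = ((m-j).factorial : ℂ) * Complex.exp (P.eval κ)
              * ∑ n ∈ range (m-j+1), ((n.factorial : ℂ))⁻¹ * (q ^ n).coeff (m-j) :=
          IH (m-j) (by omega) (by omega)
        rw [h1, h2, h3]
        have hrid : ((m.choose j : ℕ):ℂ) * (((j+1).factorial : ℕ):ℂ) * (((m-j).factorial : ℕ):ℂ)
            = (m.factorial : ℂ) * ((j+1:ℕ):ℂ) := by
          have : m.choose j * (j+1).factorial * (m-j).factorial = m.factorial * (j+1) := by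
            rw [Nat.factorial_succ]
            calc m.choose j * ((j+1) * j.factorial) * (m-j).factorial
                = (m.choose j * j.factorial * (m-j).factorial) * (j+1) := by ring
              _ = m.factorial * (j+1) := by rw [Nat.choose_mul_factorial_mul_factorial hjm]
          calc ((m.choose j : ℕ):ℂ) * (((j+1).factorial : ℕ):ℂ) * (((m-j).factorial : ℕ):ℂ)
              = ((m.choose j * (j+1).factorial * (m-j).factorial : ℕ) : ℂ) := by push_cast; ring
            _ = ((m.factorial * (j+1) : ℕ) : ℂ) := by rw [this]
            _ = (m.factorial : ℂ) * ((j+1:ℕ):ℂ) := by push_cast; ring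
        calc ((m.choose j : ℕ) : ℂ) * ((((j+1).factorial : ℕ) : ℂ) * q.coeff (j+1))
              * (((m-j).factorial : ℂ) * Complex.exp (P.eval κ)
                * ∑ n ∈ range (m-j+1), ((n.factorial : ℂ))⁻¹ * (q ^ n).coeff (m-j))
            = (((m.choose j : ℕ):ℂ) * (((j+1).factorial : ℕ):ℂ) * (((m-j).factorial : ℕ):ℂ))
              * q.coeff (j+1) * Complex.exp (P.eval κ)
              * ∑ n ∈ range (m-j+1), ((n.factorial : ℂ))⁻¹ * (q ^ n).coeff (m-j) := by
              push_cast; ring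
          _ = (m.factorial : ℂ) * Complex.exp (P.eval κ) *
              (((j+1:ℕ) : ℂ) * q.coeff (j+1) *
                ∑ n ∈ range (m-j+1), ((n.factorial : ℂ))⁻¹ * (q ^ n).coeff (m-j)) := by
              rw [hrid]; push_cast; ring
      rw [Finset.sum_congr rfl hterm, ← Finset.mul_sum, ← formal_rec q h0 m]
      rw [Nat.factorial_succ]
      push_cast
      ring

open Polynomial Finset

namespace Stmt16Aux

variable (N s : ℕ)

/-- constants-to-diagonal ring hom -/
def chi : (Fin N → ℂ) →+* Matrix (Fin s × Fin N) (Fin s × Fin N) ℂ where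
  toFun r := Matrix.diagonal fun x => r x.2
  map_one' := by
    show Matrix.diagonal (fun x : Fin s × Fin N => (1 : Fin N → ℂ) x.2) = 1
    simp
  map_mul' r t := by
    show Matrix.diagonal (fun x : Fin s × Fin N => (r * t) x.2)
      = Matrix.diagonal (fun x : Fin s × Fin N => r x.2)
        * Matrix.diagonal (fun x : Fin s × Fin N => t x.2)
    rw [Matrix.diagonal_mul_diagonal]
    rfl
  map_zero' := by
    show Matrix.diagonal (fun x : Fin s × Fin N => (0 : Fin N → ℂ) x.2) = 0
    simp
  map_add' r t := by
    show Matrix.diagonal (fun x : Fin s × Fin N => (r + t) x.2)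
      = Matrix.diagonal (fun x : Fin s × Fin N => r x.2)
        + Matrix.diagonal (fun x : Fin s × Fin N => t x.2)
    rw [Matrix.diagonal_add]
    rfl

/-- the block shift matrix -/
def J : Matrix (Fin s × Fin N) (Fin s × Fin N) ℂ :=
  Matrix.of fun x y => if x.2 = y.2 ∧ (y.1 : ℕ) + 1 = (x.1 : ℕ) then 1 else 0

lemma chi_apply (r : Fin N → ℂ) :
    chi N s r = Matrix.diagonal fun x => r x.2 := rfl

lemma chi_commute_J : ∀ r, Commute (chi N s r) (J N s) := by
  intro r
  show chi N s r * J N s = J N s * chi N s r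
  ext x y
  rw [Matrix.mul_apply, Matrix.mul_apply]
  rw [Finset.sum_eq_single x (fun z _ hz => by
      simp [chi, Matrix.diagonal_apply_ne' _ hz]) (by simp)]
  rw [Finset.sum_eq_single y (fun z _ hz => by
      simp [chi, Matrix.diagonal_apply_ne _ hz]) (by simp)]
  simp only [chi, RingHom.coe_mk, MonoidHom.coe_mk, OneHom.coe_mk, Matrix.diagonal_apply_eq]
  unfold J
  by_cases hcond : x.2 = y.2 ∧ (y.1 : ℕ) + 1 = (x.1 : ℕ)
  · simp [hcond.1, Matrix.of_apply, hcond]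
  · simp [Matrix.of_apply, hcond]

lemma J_pow (m : ℕ) : (J N s) ^ m
    = Matrix.of fun x y => if x.2 = y.2 ∧ (y.1 : ℕ) + m = (x.1 : ℕ) then 1 else 0 := by
  induction m with
  | zero =>
    ext x y
    simp only [pow_zero, Matrix.one_apply, Matrix.of_apply, add_zero]
    by_cases h : x = y
    · subst h; simp
    · rw [if_neg h, if_neg]
      rintro ⟨h2, h1⟩
      exact h (Prod.ext (Fin.ext h1.symm) h2)
  | succ m ih =>
    ext x y
    rw [pow_succ, Matrix.mul_apply, ih]
    simp only [Matrix.of_apply, J]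
    by_cases hy : (y.1 : ℕ) + 1 < s
    · rw [Finset.sum_eq_single ((⟨(y.1 : ℕ) + 1, hy⟩ : Fin s), y.2)]
      · simp only [Fin.val_mk, and_self, if_true, reduceIte, mul_one]
        by_cases hA : x.2 = y.2 ∧ (y.1:ℕ) + 1 + m = (x.1:ℕ)
        · rw [if_pos hA, if_pos ⟨hA.1, by omega⟩]
        · rw [if_neg hA, if_neg (fun h => hA ⟨h.1, by omega⟩)]
      · intro z _ hz
        rcases Decidable.em (z.2 = y.2 ∧ (y.1:ℕ) + 1 = (z.1:ℕ)) with hc | hc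
        · exfalso
          apply hz
          have hz1 : z.1 = (⟨(y.1:ℕ)+1, hy⟩ : Fin s) := by
            apply Fin.ext
            show (z.1:ℕ) = (y.1:ℕ)+1
            omega
          exact Prod.ext hz1 hc.1
        · rw [if_neg hc, mul_zero]
      · simp
    · rw [Finset.sum_eq_zero (fun z _ => by
        rcases Decidable.em (z.2 = y.2 ∧ (y.1:ℕ) + 1 = (z.1:ℕ)) with hc | hc
        · exfalso; have := z.1.isLt; omega
        · rw [if_neg hc, mul_zero])]
      rw [if_neg]
      rintro ⟨h1, h2⟩
      have := x.1.isLt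
      omega

/-- the Toeplitz homomorphism -/
noncomputable def Phi : Polynomial (Fin N → ℂ) →+* Matrix (Fin s × Fin N) (Fin s × Fin N) ℂ :=
  Polynomial.eval₂RingHom' (chi N s) (J N s) (chi_commute_J N s)

lemma Phi_apply (q : Polynomial (Fin N → ℂ)) (x y : Fin s × Fin N) :
    Phi N s q x y
      = if x.2 = y.2 ∧ (y.1 : ℕ) ≤ (x.1 : ℕ) then q.coeff ((x.1 : ℕ) - (y.1 : ℕ)) x.2 else 0 := by
  have hrepr : Phi N s q = q.sum fun e a => chi N s a * (J N s) ^ e := by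
    simp [Phi, Polynomial.eval₂RingHom', Polynomial.eval₂_eq_sum]
  rw [hrepr, Polynomial.sum, Matrix.sum_apply]
  have hterm : ∀ e, (chi N s (q.coeff e) * (J N s) ^ e) x y
      = if e = (x.1 : ℕ) - (y.1 : ℕ) ∧ x.2 = y.2 ∧ (y.1 : ℕ) ≤ (x.1 : ℕ)
        then q.coeff ((x.1 : ℕ) - (y.1 : ℕ)) x.2 else 0 := by
    intro e
    rw [J_pow, chi_apply]
    rw [Matrix.diagonal_mul, Matrix.of_apply]
    by_cases hc : x.2 = y.2 ∧ (y.1 : ℕ) + e = (x.1 : ℕ)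
    · obtain ⟨hc1, hc2⟩ := hc
      have he : e = (x.1:ℕ) - (y.1:ℕ) := by omega
      rw [if_pos ⟨hc1, hc2⟩, mul_one, if_pos ⟨he, hc1, by omega⟩, he]
    · rw [if_neg hc, mul_zero, if_neg]
      rintro ⟨h1, h2, h3⟩
      exact hc ⟨h2, by omega⟩
  rw [Finset.sum_congr rfl (fun e _ => hterm e)]
  by_cases hcond : x.2 = y.2 ∧ (y.1 : ℕ) ≤ (x.1 : ℕ)
  · have he : ∀ e : ℕ, (if e = (x.1:ℕ) - (y.1:ℕ) ∧ x.2 = y.2 ∧ (y.1:ℕ) ≤ (x.1:ℕ)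
        then q.coeff ((x.1:ℕ)-(y.1:ℕ)) x.2 else 0)
        = (if e = (x.1:ℕ) - (y.1:ℕ) then q.coeff ((x.1:ℕ)-(y.1:ℕ)) x.2 else 0) := by
      intro e
      by_cases h : e = (x.1:ℕ) - (y.1:ℕ)
      · rw [if_pos ⟨h, hcond⟩, if_pos h]
      · rw [if_neg (fun hh => h hh.1), if_neg h]
    rw [Finset.sum_congr rfl (fun e _ => he e),
      Finset.sum_ite_eq' q.support ((x.1:ℕ) - (y.1:ℕ))
        (fun _ => q.coeff ((x.1:ℕ)-(y.1:ℕ)) x.2), if_pos hcond]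
    by_cases hmem : ((x.1 : ℕ) - (y.1 : ℕ)) ∈ q.support
    · rw [if_pos hmem]
    · rw [if_neg hmem]
      have hz : q.coeff ((x.1 : ℕ) - (y.1 : ℕ)) = 0 := Polynomial.notMem_support_iff.1 hmem
      rw [hz]
      rfl
  · rw [if_neg hcond, Finset.sum_eq_zero]
    intro e _
    rw [if_neg (fun h => hcond h.2)]

lemma exp_eq_sum_of_nilpotent {m : Type*} [Fintype m] [DecidableEq m]
    (A : Matrix m m ℂ) (s : ℕ) (h : A ^ s = 0) :
    NormedSpace.exp A = ∑ n ∈ range s, ((n.factorial : ℂ))⁻¹ • A ^ n := by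
  letI : NormedRing (Matrix m m ℂ) := Matrix.linftyOpNormedRing
  letI : NormedAlgebra ℂ (Matrix m m ℂ) := Matrix.linftyOpNormedAlgebra
  rw [NormedSpace.exp_eq_tsum ℂ]
  refine tsum_eq_sum fun n hn => ?_
  have hsn : s ≤ n := by simpa [Finset.mem_range, not_lt] using hn
  have hA : A ^ n = 0 := by
    calc A ^ n = A ^ s * A ^ (n - s) := by rw [← pow_add]; congr 1; omega
    _ = 0 := by rw [h, zero_mul]
  rw [hA, smul_zero]

lemma smul_eq_chi_mul (z : ℂ) (M : Matrix (Fin s × Fin N) (Fin s × Fin N) ℂ) :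
    z • M = chi N s (fun _ => z) * M := by
  show _ = Matrix.diagonal (fun _ : Fin s × Fin N => z) * M
  ext x y
  rw [Matrix.diagonal_mul, Matrix.smul_apply, smul_eq_mul]

end Stmt16Aux

open Stmt16Aux

/-- `T_s[f](κ)` : the `sN×sN` block lower-triangular Toeplitz matrix whose `(i,j)` block
(for `j ≤ i`) is `f^{(i−j)}(κ)/(i−j)!` and whose blocks above the block diagonal vanish. -/
noncomputable def Ts {N : ℕ} (s : ℕ) (f : ℂ → Matrix (Fin N) (Fin N) ℂ) (κ : ℂ) :
    Matrix (Fin s × Fin N) (Fin s × Fin N) ℂ :=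
  Matrix.of fun x y =>
    if (y.1 : ℕ) ≤ (x.1 : ℕ) then
      ((Nat.factorial ((x.1 : ℕ) - (y.1 : ℕ)) : ℂ))⁻¹ *
        iteratedDeriv ((x.1 : ℕ) - (y.1 : ℕ)) (fun k => f k x.2 y.2) κ
    else 0

/-- for a polynomial matrix function `f` with diagonal coefficient matrices,
taking the matrix exponential commutes with the block lower-triangular Toeplitz construction:
`exp(T_s[f](κ)) = T_s[exp∘f](κ)`. -/
theorem stmt16 (N s : ℕ) (hN : 1 ≤ N) (hs : 1 ≤ s) (κ : ℂ) (d : ℕ)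
    (c : ℕ → Matrix (Fin N) (Fin N) ℂ) (hc : ∀ j, (c j).IsDiag)
    (f : ℂ → Matrix (Fin N) (Fin N) ℂ)
    (hf : ∀ k, f k = ∑ j ∈ Finset.range (d + 1), k ^ j • c j) :
    NormedSpace.exp (Ts s f κ) = Ts s (fun k => NormedSpace.exp (f k)) κ := by
  classical
  -- the scalar diagonal polynomials
  set P : Fin N → Polynomial ℂ :=
    fun i => ∑ j ∈ Finset.range (d+1), Polynomial.C (c j i i) * Polynomial.X ^ j with hPdef
  have hfd : ∀ i : Fin N, (fun k => f k i i) = fun k => (P i).eval k := by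
    intro i
    funext k
    rw [hf, hPdef]
    simp only [Matrix.sum_apply, Matrix.smul_apply, smul_eq_mul, eval_finset_sum, eval_mul,
      eval_C, eval_pow, eval_X]
    exact Finset.sum_congr rfl fun j _ => mul_comm _ _
  have hoff : ∀ i j : Fin N, i ≠ j → (fun k => f k i j) = fun _ => (0:ℂ) := by
    intro i j hij
    funext k
    rw [hf]
    simp only [Matrix.sum_apply, Matrix.smul_apply, smul_eq_mul]
    exact Finset.sum_eq_zero fun t _ => by rw [hc t hij, mul_zero]
  have hitd0 : ∀ m, iteratedDeriv m (fun _ : ℂ => (0:ℂ)) κ = 0 := by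
    intro m
    have h0 : (fun _ : ℂ => (0:ℂ)) = fun k => (0 : Polynomial ℂ).eval k := by funext k; simp
    rw [h0, iteratedDeriv_eval, Function.iterate_fixed derivative_zero m]
    simp
  -- the coefficient family, constant term, exponential of constant term
  set g : ℕ → (Fin N → ℂ) :=
    fun m i => ((m.factorial : ℂ))⁻¹ * iteratedDeriv m (fun k => f k i i) κ with hgdef
  set g0 : Fin N → ℂ := fun i => f κ i i with hg0def
  set e : Fin N → ℂ := fun i => Complex.exp (f κ i i) with hedef
  have hg00 : g 0 = g0 := by
    funext i
    rw [hgdef, hg0def]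
    simp [iteratedDeriv_zero]
  -- polynomials over R = Fin N → ℂ
  set F : Polynomial (Fin N → ℂ) := ∑ m ∈ Finset.range s, C (g m) * X ^ m with hFdef
  set G : Polynomial (Fin N → ℂ) := ∑ m ∈ Finset.Ico 1 s, C (g m) * X ^ m with hGdef
  have coeff_F : ∀ t, F.coeff t = if t < s then g t else 0 := by
    intro t
    rw [hFdef, coeff_sum_CX]
    simp [Finset.mem_range]
  have coeff_G : ∀ t, G.coeff t = if 1 ≤ t ∧ t < s then g t else 0 := by
    intro t
    rw [hGdef, coeff_sum_CX]
    simp [Finset.mem_Ico]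
  have hG0 : G.coeff 0 = 0 := by
    rw [coeff_G]
    simp
  have hFG : F = C g0 + G := by
    rw [hFdef, hGdef, Finset.range_eq_Ico, Finset.sum_eq_sum_Ico_succ_bot hs]
    rw [pow_zero, mul_one, hg00]
  -- Ts s f κ = Phi F
  have hTs : Ts s f κ = Phi N s F := by
    ext x y
    rw [Phi_apply]
    show (if (y.1:ℕ) ≤ (x.1:ℕ) then
        ((((x.1:ℕ)-(y.1:ℕ)).factorial : ℂ))⁻¹ *
          iteratedDeriv ((x.1:ℕ)-(y.1:ℕ)) (fun k => f k x.2 y.2) κ else 0) = _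
    by_cases hle : (y.1:ℕ) ≤ (x.1:ℕ)
    · by_cases hxy : x.2 = y.2
      · rw [if_pos hle, if_pos ⟨hxy, hle⟩, coeff_F,
          if_pos (show (x.1:ℕ)-(y.1:ℕ) < s by have := x.1.isLt; omega), hgdef]
        rw [hxy]
      · rw [if_pos hle, if_neg (fun h => hxy h.1), hoff _ _ hxy, hitd0, mul_zero]
    · rw [if_neg hle, if_neg (fun h => hle h.2)]
  -- nilpotency
  have hGnil : (Phi N s G) ^ s = 0 := by
    rw [← map_pow]
    ext x y
    rw [Phi_apply, Matrix.zero_apply]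
    by_cases hcond : x.2 = y.2 ∧ (y.1:ℕ) ≤ (x.1:ℕ)
    · rw [if_pos hcond,
        coeff_pow_eq_zero_of_lt hG0 (show (x.1:ℕ)-(y.1:ℕ) < s by have := x.1.isLt; omega)]
      rfl
    · rw [if_neg hcond]
  have hPhiC : ∀ r : Fin N → ℂ, Phi N s (C r) = chi N s r := by
    intro r
    simp [Phi, Polynomial.eval₂RingHom']
  have hcomm : Commute (Phi N s (C g0)) (Phi N s G) := by
    show _ * _ = _ * _
    rw [← map_mul, ← map_mul, mul_comm]
  have hexpdiag : ∀ r : Fin N → ℂ,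
      NormedSpace.exp (chi N s r) = chi N s fun i => Complex.exp (r i) := by
    intro r
    rw [chi_apply, Matrix.exp_diagonal, chi_apply]
    congr 1
    rw [Pi.exp_def]
    funext x
    rw [← Complex.exp_eq_exp_ℂ]
  -- the exponential series polynomial
  set Eser : Polynomial (Fin N → ℂ) :=
    ∑ n ∈ Finset.range s, C (fun _ => ((n.factorial : ℂ))⁻¹) * G ^ n with hEdef
  have hexpG : NormedSpace.exp (Phi N s G) = Phi N s Eser := by
    rw [exp_eq_sum_of_nilpotent _ s hGnil, hEdef,
      map_sum (Phi N s) (fun n => C (fun _ : Fin N => ((n.factorial : ℂ))⁻¹) * G ^ n)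
        (Finset.range s)]
    refine Finset.sum_congr rfl fun n _ => ?_
    rw [smul_eq_chi_mul, ← hPhiC, ← map_pow, ← map_mul]
  have hLHS : NormedSpace.exp (Ts s f κ) = Phi N s (C e * Eser) := by
    rw [hTs, hFG, map_add (Phi N s) (C g0) G,
      Matrix.exp_add_of_commute _ _ hcomm, hPhiC, hexpdiag, hexpG,
      map_mul, hPhiC]
  rw [hLHS]
  -- now the right-hand side
  have hdiagf : ∀ k, f k = Matrix.diagonal fun i => (P i).eval k := by
    intro k
    ext i j
    by_cases hij : i = j
    · subst hij
      rw [Matrix.diagonal_apply_eq]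
      exact congr_fun (hfd i) k
    · rw [Matrix.diagonal_apply_ne _ hij]
      exact congr_fun (hoff i j hij) k
  have hexpf : ∀ k, NormedSpace.exp (f k)
      = Matrix.diagonal fun i => Complex.exp ((P i).eval k) := by
    intro k
    rw [hdiagf k, Matrix.exp_diagonal]
    congr 1
    rw [Pi.exp_def]
    funext i
    rw [← Complex.exp_eq_exp_ℂ]
  ext ⟨a, i⟩ ⟨b, j⟩
  rw [Phi_apply]
  show _ = (if (b:ℕ) ≤ (a:ℕ) then
      ((((a:ℕ)-(b:ℕ)).factorial : ℂ))⁻¹ *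
        iteratedDeriv ((a:ℕ)-(b:ℕ)) (fun k => NormedSpace.exp (f k) i j) κ else 0)
  simp only [hexpf]
  by_cases hij : i = j
  · subst hij
    simp only [Matrix.diagonal_apply_eq]
    by_cases hab : (b:ℕ) ≤ (a:ℕ)
    · simp only [true_and]
      rw [if_pos hab, if_pos hab]
      set m := (a:ℕ) - (b:ℕ) with hmdef
      have hm : m < s := by have := a.isLt; omega
      -- scalar polynomial q
      set q : Polynomial ℂ := G.map (Pi.evalRingHom (fun _ : Fin N => ℂ) i) with hqdef
      have hqcoeff : ∀ t, q.coeff t = G.coeff t i := by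
        intro t
        rw [hqdef, Polynomial.coeff_map]
        rfl
      have hqpow : ∀ n t, (q ^ n).coeff t = (G ^ n).coeff t i := by
        intro n t
        rw [hqdef, ← Polynomial.map_pow, Polynomial.coeff_map]
        rfl
      have h0q : q.coeff 0 = 0 := by
        rw [hqcoeff, hG0]
        rfl
      have hq : ∀ t, 0 < t → t < s →
          q.coeff t = ((t.factorial : ℂ))⁻¹ * iteratedDeriv t (fun k => (P i).eval k) κ := by
        intro t ht1 ht2
        rw [hqcoeff, coeff_G, if_pos ⟨ht1, ht2⟩, hgdef, ← hfd i]
      have hscal := scalarL (P i) κ s q h0q hq m hm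
      -- compute the coefficient of C e * Eser
      rw [coeff_C_mul]
      have hEs : Eser.coeff m
          = ∑ n ∈ Finset.range s, (fun _ : Fin N => ((n.factorial : ℂ))⁻¹) * (G ^ n).coeff m := by
        rw [hEdef, finset_sum_coeff]
        exact Finset.sum_congr rfl fun n _ => coeff_C_mul _
      rw [hEs]
      rw [Pi.mul_apply, Finset.sum_apply]
      have hsum : ∑ n ∈ Finset.range s,
            ((fun _ : Fin N => ((n.factorial : ℂ))⁻¹) * (G ^ n).coeff m) i
          = ∑ n ∈ Finset.range (m+1), ((n.factorial : ℂ))⁻¹ * (q ^ n).coeff m := by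
        rw [← Finset.sum_subset (Finset.range_subset_range.2 (by omega : m + 1 ≤ s))]
        · exact Finset.sum_congr rfl fun n _ => by rw [Pi.mul_apply, hqpow]
        · intro n _ hn
          have hlt : m < n := by
            simp only [Finset.mem_range] at hn
            omega
          rw [Pi.mul_apply, ← hqpow, coeff_pow_eq_zero_of_lt h0q hlt, mul_zero]
      rw [hsum, hscal]
      have hev : f κ i i = (P i).eval κ := congr_fun (hfd i) κ
      have hbe : e i = Complex.exp ((P i).eval κ) := by
        rw [hedef]
        exact congrArg Complex.exp hev
      rw [hbe]
      have hfacne : ((m.factorial : ℕ) : ℂ) ≠ 0 := Nat.cast_ne_zero.2 (Nat.factorial_ne_zero m)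
      field_simp
      try ring
    · rw [if_neg (by rintro ⟨-, h⟩; exact hab h), if_neg hab]
  · rw [if_neg (by rintro ⟨h, -⟩; exact hij h)]
    have hzf : (fun k => Matrix.diagonal (fun i' => Complex.exp ((P i').eval k)) i j)
        = fun _ => (0:ℂ) := by
      funext k
      rw [Matrix.diagonal_apply_ne _ hij]
    rw [hzf, hitd0, mul_zero, ite_self]
end

section
/- Let a₁ > a₂ > a₃ and b₁, b₂, b₃ be real numbers, A = diag(a₁,a₂,a₃), B = diag(b₁,b₂,b₃). Let Q : ℝ² → Matrix₃(ℂ) be continuously differentiable with Q(x,t)† = −Q(x,t) (anti-Hermitian) for all (x,t). Define U(k,x,t) = −ikA + i[A, Q(x,t)] and V(k,x,t) = −ikB + i[B, Q(x,t)], and set u₁ = √(a₁−a₂)·Q₁₂, u₂ = √(a₂−a₃)·Q₂₃, u₃ = √(a₁−a₃)·Q₁₃. Then the zero-curvature condition ∂_t U − ∂_x V + [U, V] = 0 holds for all k ∈ ℂ and all (x,t) ∈ ℝ² if and only if (u₁, u₂, u₃) satisfies the three-wave resonant interaction system: ∂_t u₁ + v₁ ∂_x u₁ + iε u₂* u₃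 = 0, ∂_t u₂ + v₂ ∂_x u₂ + iε u₁* u₃ = 0, ∂_t u₃ + v₃ ∂_x u₃ + iε u₁ u₂ = 0. -/
open Matrix

noncomputable def Emat (a b : Fin 3 → ℝ) (Q : ℝ → ℝ → Matrix (Fin 3) (Fin 3) ℂ)
    (x t : ℝ) (i j : Fin 3) : ℂ :=
  Complex.I * (((a i : ℂ) - a j) * deriv (fun τ => Q x τ i j) t)
  - Complex.I * (((b i : ℂ) - b j) * deriv (fun ξ => Q ξ t i j) x)
  - ∑ m : Fin 3, ((((a i : ℂ) - a m) * ((b m : ℂ) - b j)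
      - ((b i : ℂ) - b m) * ((a m : ℂ) - a j)) * (Q x t i m * Q x t m j))

set_option maxHeartbeats 2000000 in
/-- for `A = diag(a₁,a₂,a₃)`, `B = diag(b₁,b₂,b₃)` with `a₁ > a₂ > a₃`, an
anti-Hermitian continuously differentiable `Q(x,t)`, and
`U = −ikA + i[A,Q]`, `V = −ikB + i[B,Q]`,
`u₁ = √(a₁−a₂)Q₁₂`, `u₂ = √(a₂−a₃)Q₂₃`, `u₃ = √(a₁−a₃)Q₁₃`, the zero-curvature condition
`∂_t U − ∂_x V + [U,V] = 0` for all `k, x, t` holds if and only if `(u₁,u₂,u₃)` satisfies the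
three-wave resonant interaction system. -/
theorem stmt19 (a b : Fin 3 → ℝ) (ha12 : a 0 > a 1) (ha23 : a 1 > a 2)
    (Q : ℝ → ℝ → Matrix (Fin 3) (Fin 3) ℂ)
    (hQsmooth : ∀ i j : Fin 3, ContDiff ℝ 1 fun p : ℝ × ℝ => Q p.1 p.2 i j)
    (hQanti : ∀ x t : ℝ, (Q x t)ᴴ = -(Q x t))
    (A B : Matrix (Fin 3) (Fin 3) ℂ)
    (hA : A = Matrix.diagonal fun i => (a i : ℂ))
    (hB : B = Matrix.diagonal fun i => (b i : ℂ))
    (U V : ℂ → ℝ → ℝ → Matrix (Fin 3) (Fin 3) ℂ)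
    (hU : ∀ (k : ℂ) (x t : ℝ),
      U k x t = (-(Complex.I * k)) • A + Complex.I • (A * Q x t - Q x t * A))
    (hV : ∀ (k : ℂ) (x t : ℝ),
      V k x t = (-(Complex.I * k)) • B + Complex.I • (B * Q x t - Q x t * B))
    (u₁ u₂ u₃ : ℝ → ℝ → ℂ)
    (hu₁ : ∀ x t, u₁ x t = (Real.sqrt (a 0 - a 1) : ℂ) * Q x t 0 1)
    (hu₂ : ∀ x t, u₂ x t = (Real.sqrt (a 1 - a 2) : ℂ) * Q x t 1 2)
    (hu₃ : ∀ x t, u₃ x t = (Real.sqrt (a 0 - a 2) : ℂ) * Q x t 0 2)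
    (v₁ v₂ v₃ ε : ℝ)
    (hv₁ : v₁ = (b 1 - b 0) / (a 0 - a 1))
    (hv₂ : v₂ = (b 2 - b 1) / (a 1 - a 2))
    (hv₃ : v₃ = (b 2 - b 0) / (a 0 - a 2))
    (hε : ε = (a 0 * b 1 - a 1 * b 0 + a 1 * b 2 - a 2 * b 1 + a 2 * b 0 - a 0 * b 2) /
      Real.sqrt ((a 0 - a 1) * (a 1 - a 2) * (a 0 - a 2))) :
    (∀ (k : ℂ) (x t : ℝ),
        (Matrix.of fun i j => deriv (fun τ => U k x τ i j) t) -
          (Matrix.of fun i j => deriv (fun ξ => V k ξ t i j) x) +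
          (U k x t * V k x t - V k x t * U k x t) = 0) ↔
      (∀ x t : ℝ,
          deriv (fun τ => u₁ x τ) t + (v₁ : ℂ) * deriv (fun ξ => u₁ ξ t) x +
            Complex.I * (ε : ℂ) * (starRingEnd ℂ) (u₂ x t) * u₃ x t = 0) ∧
        (∀ x t : ℝ,
          deriv (fun τ => u₂ x τ) t + (v₂ : ℂ) * deriv (fun ξ => u₂ ξ t) x +
            Complex.I * (ε : ℂ) * (starRingEnd ℂ) (u₁ x t) * u₃ x t = 0) ∧
        (∀ x t : ℝ,
          deriv (fun τ => u₃ x τ) t + (v₃ : ℂ) * deriv (fun ξ => u₃ ξ t) x +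
            Complex.I * (ε : ℂ) * u₁ x t * u₂ x t = 0) := by
  -- basic real facts
  have h01 : (0:ℝ) < a 0 - a 1 := sub_pos.2 ha12
  have h12 : (0:ℝ) < a 1 - a 2 := sub_pos.2 ha23
  have h02 : (0:ℝ) < a 0 - a 2 := by linarith
  have hα0 : (0:ℝ) < Real.sqrt (a 0 - a 1) := Real.sqrt_pos.2 h01
  have hβ0 : (0:ℝ) < Real.sqrt (a 1 - a 2) := Real.sqrt_pos.2 h12
  have hγ0 : (0:ℝ) < Real.sqrt (a 0 - a 2) := Real.sqrt_pos.2 h02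
  have hαne : ((Real.sqrt (a 0 - a 1) : ℝ) : ℂ) ≠ 0 := Complex.ofReal_ne_zero.2 hα0.ne'
  have hβne : ((Real.sqrt (a 1 - a 2) : ℝ) : ℂ) ≠ 0 := Complex.ofReal_ne_zero.2 hβ0.ne'
  have hγne : ((Real.sqrt (a 0 - a 2) : ℝ) : ℂ) ≠ 0 := Complex.ofReal_ne_zero.2 hγ0.ne'
  have hsα : ((Real.sqrt (a 0 - a 1) : ℝ) : ℂ) ^ 2 = (a 0 : ℂ) - a 1 := by
    rw [← Complex.ofReal_pow, Real.sq_sqrt h01.le]; push_cast; ring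
  have hsβ : ((Real.sqrt (a 1 - a 2) : ℝ) : ℂ) ^ 2 = (a 1 : ℂ) - a 2 := by
    rw [← Complex.ofReal_pow, Real.sq_sqrt h12.le]; push_cast; ring
  have hsγ : ((Real.sqrt (a 0 - a 2) : ℝ) : ℂ) ^ 2 = (a 0 : ℂ) - a 2 := by
    rw [← Complex.ofReal_pow, Real.sq_sqrt h02.le]; push_cast; ring
  have hIa01 : Complex.I * ((a 0 : ℂ) - a 1) ≠ 0 :=
    mul_ne_zero Complex.I_ne_zero (by rw [sub_ne_zero]; exact_mod_cast ha12.ne')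
  have hIa12 : Complex.I * ((a 1 : ℂ) - a 2) ≠ 0 :=
    mul_ne_zero Complex.I_ne_zero (by rw [sub_ne_zero]; exact_mod_cast ha23.ne')
  have hIa02 : Complex.I * ((a 0 : ℂ) - a 2) ≠ 0 :=
    mul_ne_zero Complex.I_ne_zero (by rw [sub_ne_zero]; exact_mod_cast (lt_trans ha23 ha12).ne')
  have hkeyR : ε * (Real.sqrt (a 0 - a 1) * (Real.sqrt (a 1 - a 2) * Real.sqrt (a 0 - a 2)))
      = a 0 * b 1 - a 1 * b 0 + a 1 * b 2 - a 2 * b 1 + a 2 * b 0 - a 0 * b 2 := by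
    rw [hε, show Real.sqrt ((a 0 - a 1) * (a 1 - a 2) * (a 0 - a 2))
        = Real.sqrt (a 0 - a 1) * (Real.sqrt (a 1 - a 2) * Real.sqrt (a 0 - a 2)) by
      rw [mul_assoc, Real.sqrt_mul h01.le, Real.sqrt_mul h12.le]]
    field_simp
  have hkeyC : (ε : ℂ) * (((Real.sqrt (a 0 - a 1) : ℝ) : ℂ)
        * (((Real.sqrt (a 1 - a 2) : ℝ) : ℂ) * ((Real.sqrt (a 0 - a 2) : ℝ) : ℂ)))
      = (a 0 : ℂ) * b 1 - (a 1 : ℂ) * b 0 + (a 1 : ℂ) * b 2 - (a 2 : ℂ) * b 1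
        + (a 2 : ℂ) * b 0 - (a 0 : ℂ) * b 2 := by
    have := congrArg (fun r : ℝ => (r : ℂ)) hkeyR
    push_cast at this
    exact this
  have hv1C : (v₁ : ℂ) * ((a 0 : ℂ) - a 1) = (b 1 : ℂ) - b 0 := by
    have : v₁ * (a 0 - a 1) = b 1 - b 0 := by rw [hv₁]; field_simp
    have h2 := congrArg (fun r : ℝ => (r : ℂ)) this
    push_cast at h2; exact h2
  have hv2C : (v₂ : ℂ) * ((a 1 : ℂ) - a 2) = (b 2 : ℂ) - b 1 := by
    have : v₂ * (a 1 - a 2) = b 2 - b 1 := by rw [hv₂]; field_simp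
    have h2 := congrArg (fun r : ℝ => (r : ℂ)) this
    push_cast at h2; exact h2
  have hv3C : (v₃ : ℂ) * ((a 0 : ℂ) - a 2) = (b 2 : ℂ) - b 0 := by
    have : v₃ * (a 0 - a 2) = b 2 - b 0 := by rw [hv₃]; field_simp
    have h2 := congrArg (fun r : ℝ => (r : ℂ)) this
    push_cast at h2; exact h2
  -- differentiability
  have hdt : ∀ (x : ℝ) (i j : Fin 3), Differentiable ℝ (fun τ : ℝ => Q x τ i j) := by
    intro x i j
    exact ((hQsmooth i j).differentiable one_ne_zero).comp
      ((differentiable_const x).prodMk differentiable_id)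
  have hdx : ∀ (t : ℝ) (i j : Fin 3), Differentiable ℝ (fun ξ : ℝ => Q ξ t i j) := by
    intro t i j
    exact ((hQsmooth i j).differentiable one_ne_zero).comp
      (differentiable_id.prodMk (differentiable_const t))
  -- anti-Hermitian relations
  have hQc : ∀ (x t : ℝ) (i j : Fin 3), (starRingEnd ℂ) (Q x t i j) = -Q x t j i := by
    intro x t i j
    have h := hQanti x t
    rw [← Matrix.ext_iff] at h
    simpa [Matrix.conjTranspose_apply, Matrix.neg_apply] using h j i
  have hdconj_t : ∀ (x t : ℝ) (i j : Fin 3),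
      (starRingEnd ℂ) (deriv (fun τ => Q x τ i j) t) = -deriv (fun τ => Q x τ j i) t := by
    intro x t i j
    have h1 : (fun τ => Q x τ j i) = fun τ => -(starRingEnd ℂ) (Q x τ i j) :=
      funext fun τ => by have h := hQc x τ i j; linear_combination h
    rw [h1, deriv.fun_neg]
    simp only [starRingEnd_apply]
    rw [deriv.star, neg_neg]
  have hdconj_x : ∀ (x t : ℝ) (i j : Fin 3),
      (starRingEnd ℂ) (deriv (fun ξ => Q ξ t i j) x) = -deriv (fun ξ => Q ξ t j i) x := by
    intro x t i j
    have h1 : (fun ξ => Q ξ t j i) = fun ξ => -(starRingEnd ℂ) (Q ξ t i j) :=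
      funext fun ξ => by have h := hQc ξ t i j; linear_combination h
    rw [h1, deriv.fun_neg]
    simp only [starRingEnd_apply]
    rw [deriv.star, neg_neg]
  -- entrywise formulas for U, V and their derivatives
  have hUe : ∀ (k : ℂ) (x t : ℝ) (i j : Fin 3),
      U k x t i j = -(Complex.I * k) * Matrix.diagonal (fun i => (a i : ℂ)) i j
        + (Complex.I * ((a i : ℂ) - a j)) * Q x t i j := by
    intro k x t i j
    rw [hU, hA]
    simp [Matrix.add_apply, Matrix.smul_apply, Matrix.sub_apply, Matrix.diagonal_mul,
      Matrix.mul_diagonal, smul_eq_mul]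
    ring
  have hVe : ∀ (k : ℂ) (x t : ℝ) (i j : Fin 3),
      V k x t i j = -(Complex.I * k) * Matrix.diagonal (fun i => (b i : ℂ)) i j
        + (Complex.I * ((b i : ℂ) - b j)) * Q x t i j := by
    intro k x t i j
    rw [hV, hB]
    simp [Matrix.add_apply, Matrix.smul_apply, Matrix.sub_apply, Matrix.diagonal_mul,
      Matrix.mul_diagonal, smul_eq_mul]
    ring
  have hUd : ∀ (k : ℂ) (x t : ℝ) (i j : Fin 3),
      deriv (fun τ => U k x τ i j) t
        = (Complex.I * ((a i : ℂ) - a j)) * deriv (fun τ => Q x τ i j) t := by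
    intro k x t i j
    have h1 : (fun τ => U k x τ i j)
        = fun τ => -(Complex.I * k) * Matrix.diagonal (fun i => (a i : ℂ)) i j
          + (Complex.I * ((a i : ℂ) - a j)) * Q x τ i j := funext fun τ => hUe k x τ i j
    rw [h1, deriv_const_add, deriv_const_mul _ ((hdt x i j) t)]
  have hVd : ∀ (k : ℂ) (x t : ℝ) (i j : Fin 3),
      deriv (fun ξ => V k ξ t i j) x
        = (Complex.I * ((b i : ℂ) - b j)) * deriv (fun ξ => Q ξ t i j) x := by
    intro k x t i j
    have h1 : (fun ξ => V k ξ t i j)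
        = fun ξ => -(Complex.I * k) * Matrix.diagonal (fun i => (b i : ℂ)) i j
          + (Complex.I * ((b i : ℂ) - b j)) * Q ξ t i j := funext fun ξ => hVe k ξ t i j
    rw [h1, deriv_const_add, deriv_const_mul _ ((hdx t i j) x)]
  -- the main matrix identity
  have hmain : ∀ (k : ℂ) (x t : ℝ),
      ((Matrix.of fun i j => deriv (fun τ => U k x τ i j) t) -
          (Matrix.of fun i j => deriv (fun ξ => V k ξ t i j) x) +
          (U k x t * V k x t - V k x t * U k x t))
        = Matrix.of (fun i j => Emat a b Q x t i j) := by
    intro k x t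
    ext i j
    simp only [Matrix.add_apply, Matrix.sub_apply, Matrix.mul_apply, Matrix.of_apply,
      hUd, hVd, hUe, hVe, Emat, Fin.sum_univ_three]
    fin_cases i <;> fin_cases j <;>
      simp [Matrix.diagonal_apply, Fin.isValue] <;> ring_nf <;>
      simp only [Complex.I_sq] <;> ring
  -- zero-curvature ↔ E = 0
  have hzc : (∀ (k : ℂ) (x t : ℝ),
        (Matrix.of fun i j => deriv (fun τ => U k x τ i j) t) -
          (Matrix.of fun i j => deriv (fun ξ => V k ξ t i j) x) +
          (U k x t * V k x t - V k x t * U k x t) = 0)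
      ↔ (∀ (x t : ℝ) (i j : Fin 3), Emat a b Q x t i j = 0) := by
    constructor
    · intro h x t i j
      have h0 := h 0 x t
      rw [hmain] at h0
      have h2 := Matrix.ext_iff.mpr h0 i j
      simpa using h2
    · intro h k x t
      rw [hmain k x t]
      ext i j
      simp [h]
  -- diagonal entries vanish identically
  have hdiag : ∀ (x t : ℝ) (i : Fin 3), Emat a b Q x t i i = 0 := by
    intro x t i
    simp only [Emat, Fin.sum_univ_three]
    ring
  -- skew relation
  have hskew : ∀ (x t : ℝ) (i j : Fin 3),
      Emat a b Q x t j i = -(starRingEnd ℂ) (Emat a b Q x t i j) := by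
    intro x t i j
    simp only [Emat, Fin.sum_univ_three, map_add, map_sub, _root_.map_mul, map_neg,
      Complex.conj_ofReal, Complex.conj_I, hQc, hdconj_t, hdconj_x]
    ring
  -- entry (0,1) ↔ first equation
  have e01 : ∀ x t : ℝ, (Emat a b Q x t 0 1 = 0 ↔
      deriv (fun τ => u₁ x τ) t + (v₁ : ℂ) * deriv (fun ξ => u₁ ξ t) x +
        Complex.I * (ε : ℂ) * (starRingEnd ℂ) (u₂ x t) * u₃ x t = 0) := by
    intro x t
    have hd1t : deriv (fun τ => u₁ x τ) t
        = ((Real.sqrt (a 0 - a 1) : ℝ) : ℂ) * deriv (fun τ => Q x τ 0 1) t := by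
      rw [show (fun τ => u₁ x τ) = fun τ => ((Real.sqrt (a 0 - a 1) : ℝ) : ℂ) * Q x τ 0 1
        from funext fun τ => hu₁ x τ]
      exact deriv_const_mul _ ((hdt x 0 1) t)
    have hd1x : deriv (fun ξ => u₁ ξ t) x
        = ((Real.sqrt (a 0 - a 1) : ℝ) : ℂ) * deriv (fun ξ => Q ξ t 0 1) x := by
      rw [show (fun ξ => u₁ ξ t) = fun ξ => ((Real.sqrt (a 0 - a 1) : ℝ) : ℂ) * Q ξ t 0 1
        from funext fun ξ => hu₁ ξ t]
      exact deriv_const_mul _ ((hdx t 0 1) x)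
    have hmul : ((Real.sqrt (a 0 - a 1) : ℝ) : ℂ) * Emat a b Q x t 0 1
        = (Complex.I * ((a 0 : ℂ) - a 1)) *
          (deriv (fun τ => u₁ x τ) t + (v₁ : ℂ) * deriv (fun ξ => u₁ ξ t) x +
            Complex.I * (ε : ℂ) * (starRingEnd ℂ) (u₂ x t) * u₃ x t) := by
      rw [hd1t, hd1x, hu₂ x t, hu₃ x t]
      simp only [Emat, Fin.sum_univ_three, _root_.map_mul, Complex.conj_ofReal, hQc]
      linear_combination
        (-(Complex.I * ((Real.sqrt (a 0 - a 1) : ℝ) : ℂ) * deriv (fun ξ => Q ξ t 0 1) x)) * hv1C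
        + (((a 0 : ℂ) - a 1) * (ε : ℂ) * ((Real.sqrt (a 1 - a 2) : ℝ) : ℂ)
            * ((Real.sqrt (a 0 - a 2) : ℝ) : ℂ) * Q x t 2 1 * Q x t 0 2) * Complex.I_sq
        + (-(((Real.sqrt (a 0 - a 1) : ℝ) : ℂ) * Q x t 0 2 * Q x t 2 1)) * hkeyC
        + ((ε : ℂ) * ((Real.sqrt (a 1 - a 2) : ℝ) : ℂ) * ((Real.sqrt (a 0 - a 2) : ℝ) : ℂ)
            * Q x t 0 2 * Q x t 2 1) * hsα
    constructor
    · intro h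
      have h2 := hmul
      rw [h, mul_zero] at h2
      rcases mul_eq_zero.mp h2.symm with h3 | h3
      · exact absurd h3 hIa01
      · exact h3
    · intro h
      have h2 := hmul
      rw [h, mul_zero] at h2
      rcases mul_eq_zero.mp h2 with h3 | h3
      · exact absurd h3 hαne
      · exact h3
  -- entry (1,2) ↔ second equation
  have e12 : ∀ x t : ℝ, (Emat a b Q x t 1 2 = 0 ↔
      deriv (fun τ => u₂ x τ) t + (v₂ : ℂ) * deriv (fun ξ => u₂ ξ t) x +
        Complex.I * (ε : ℂ) * (starRingEnd ℂ) (u₁ x t) * u₃ x t = 0) := by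
    intro x t
    have hd2t : deriv (fun τ => u₂ x τ) t
        = ((Real.sqrt (a 1 - a 2) : ℝ) : ℂ) * deriv (fun τ => Q x τ 1 2) t := by
      rw [show (fun τ => u₂ x τ) = fun τ => ((Real.sqrt (a 1 - a 2) : ℝ) : ℂ) * Q x τ 1 2
        from funext fun τ => hu₂ x τ]
      exact deriv_const_mul _ ((hdt x 1 2) t)
    have hd2x : deriv (fun ξ => u₂ ξ t) x
        = ((Real.sqrt (a 1 - a 2) : ℝ) : ℂ) * deriv (fun ξ => Q ξ t 1 2) x := by
      rw [show (fun ξ => u₂ ξ t) = fun ξ => ((Real.sqrt (a 1 - a 2) : ℝ) : ℂ) * Q ξ t 1 2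
        from funext fun ξ => hu₂ ξ t]
      exact deriv_const_mul _ ((hdx t 1 2) x)
    have hmul : ((Real.sqrt (a 1 - a 2) : ℝ) : ℂ) * Emat a b Q x t 1 2
        = (Complex.I * ((a 1 : ℂ) - a 2)) *
          (deriv (fun τ => u₂ x τ) t + (v₂ : ℂ) * deriv (fun ξ => u₂ ξ t) x +
            Complex.I * (ε : ℂ) * (starRingEnd ℂ) (u₁ x t) * u₃ x t) := by
      rw [hd2t, hd2x, hu₁ x t, hu₃ x t]
      simp only [Emat, Fin.sum_univ_three, _root_.map_mul, Complex.conj_ofReal, hQc]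
      linear_combination
        (-(Complex.I * ((Real.sqrt (a 1 - a 2) : ℝ) : ℂ) * deriv (fun ξ => Q ξ t 1 2) x)) * hv2C
        + (((a 1 : ℂ) - a 2) * (ε : ℂ) * ((Real.sqrt (a 0 - a 1) : ℝ) : ℂ)
            * ((Real.sqrt (a 0 - a 2) : ℝ) : ℂ) * Q x t 1 0 * Q x t 0 2) * Complex.I_sq
        + (-(((Real.sqrt (a 1 - a 2) : ℝ) : ℂ) * Q x t 1 0 * Q x t 0 2)) * hkeyC
        + ((ε : ℂ) * ((Real.sqrt (a 0 - a 1) : ℝ) : ℂ) * ((Real.sqrt (a 0 - a 2) : ℝ) : ℂ)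
            * Q x t 1 0 * Q x t 0 2) * hsβ
    constructor
    · intro h
      have h2 := hmul
      rw [h, mul_zero] at h2
      rcases mul_eq_zero.mp h2.symm with h3 | h3
      · exact absurd h3 hIa12
      · exact h3
    · intro h
      have h2 := hmul
      rw [h, mul_zero] at h2
      rcases mul_eq_zero.mp h2 with h3 | h3
      · exact absurd h3 hβne
      · exact h3
  -- entry (0,2) ↔ third equation
  have e02 : ∀ x t : ℝ, (Emat a b Q x t 0 2 = 0 ↔
      deriv (fun τ => u₃ x τ) t + (v₃ : ℂ) * deriv (fun ξ => u₃ ξ t) x +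
        Complex.I * (ε : ℂ) * u₁ x t * u₂ x t = 0) := by
    intro x t
    have hd3t : deriv (fun τ => u₃ x τ) t
        = ((Real.sqrt (a 0 - a 2) : ℝ) : ℂ) * deriv (fun τ => Q x τ 0 2) t := by
      rw [show (fun τ => u₃ x τ) = fun τ => ((Real.sqrt (a 0 - a 2) : ℝ) : ℂ) * Q x τ 0 2
        from funext fun τ => hu₃ x τ]
      exact deriv_const_mul _ ((hdt x 0 2) t)
    have hd3x : deriv (fun ξ => u₃ ξ t) x
        = ((Real.sqrt (a 0 - a 2) : ℝ) : ℂ) * deriv (fun ξ => Q ξ t 0 2) x := by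
      rw [show (fun ξ => u₃ ξ t) = fun ξ => ((Real.sqrt (a 0 - a 2) : ℝ) : ℂ) * Q ξ t 0 2
        from funext fun ξ => hu₃ ξ t]
      exact deriv_const_mul _ ((hdx t 0 2) x)
    have hmul : ((Real.sqrt (a 0 - a 2) : ℝ) : ℂ) * Emat a b Q x t 0 2
        = (Complex.I * ((a 0 : ℂ) - a 2)) *
          (deriv (fun τ => u₃ x τ) t + (v₃ : ℂ) * deriv (fun ξ => u₃ ξ t) x +
            Complex.I * (ε : ℂ) * u₁ x t * u₂ x t) := by
      rw [hd3t, hd3x, hu₁ x t, hu₂ x t]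
      simp only [Emat, Fin.sum_univ_three]
      linear_combination
        (-(Complex.I * ((Real.sqrt (a 0 - a 2) : ℝ) : ℂ) * deriv (fun ξ => Q ξ t 0 2) x)) * hv3C
        + (-(((a 0 : ℂ) - a 2) * (ε : ℂ) * ((Real.sqrt (a 0 - a 1) : ℝ) : ℂ)
            * ((Real.sqrt (a 1 - a 2) : ℝ) : ℂ) * Q x t 0 1 * Q x t 1 2)) * Complex.I_sq
        + ((((Real.sqrt (a 0 - a 2) : ℝ) : ℂ) * Q x t 0 1 * Q x t 1 2)) * hkeyC
        + (-((ε : ℂ) * ((Real.sqrt (a 0 - a 1) : ℝ) : ℂ) * ((Real.sqrt (a 1 - a 2) : ℝ) : ℂ)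
            * Q x t 0 1 * Q x t 1 2)) * hsγ
    constructor
    · intro h
      have h2 := hmul
      rw [h, mul_zero] at h2
      rcases mul_eq_zero.mp h2.symm with h3 | h3
      · exact absurd h3 hIa02
      · exact h3
    · intro h
      have h2 := hmul
      rw [h, mul_zero] at h2
      rcases mul_eq_zero.mp h2 with h3 | h3
      · exact absurd h3 hγne
      · exact h3
  -- assemble
  refine hzc.trans ?_
  constructor
  · intro h
    exact ⟨fun x t => (e01 x t).1 (h x t 0 1), fun x t => (e12 x t).1 (h x t 1 2),
      fun x t => (e02 x t).1 (h x t 0 2)⟩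
  · rintro ⟨h1, h2, h3⟩ x t i j
    fin_cases i <;> fin_cases j
    · exact hdiag x t 0
    · exact (e01 x t).2 (h1 x t)
    · exact (e02 x t).2 (h3 x t)
    · show Emat a b Q x t 1 0 = 0
      rw [hskew x t 0 1, (e01 x t).2 (h1 x t), map_zero, neg_zero]
    · exact hdiag x t 1
    · exact (e12 x t).2 (h2 x t)
    · show Emat a b Q x t 2 0 = 0
      rw [hskew x t 0 2, (e02 x t).2 (h3 x t), map_zero, neg_zero]
    · show Emat a b Q x t 2 1 = 0
      rw [hskew x t 1 2, (e12 x t).2 (h2 x t), map_zero, neg_zero]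
    · exact hdiag x t 2
end
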